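/- If a strictly feasible pair exists, then at every minimizer (p*, y*) of the multi-slot network delay, for every node n, every slot i, and any two data links l, m outgoing from n, the marginal quantities are equal: g_l(p*_{l,i}) = g_m(p*_{m,i}), where g_l(p) = (t_l/(2σ_l)) · ((1/2)·ln(1 + p/σ_l) − t_l)^{−2} · (1 + p/σ_l)^{−1}. -/

import Mathlib

open BigOperators ENNReal

/-- A multi-slot energy harvesting network with energy cooperation: nodes `N`, data
links `L` (start node, fixed flow `t l > 0`, noise power `σ l > 0`), energy links `Q`
(start node, end node, efficiency `α q ∈ (0,1]`), `T` time slots and harvested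
energies `E n i ≥ 0` at node `n` in slot `i`. -/
structure NetT where
  N : Type
  L : Type
  Q : Type
  [fintypeN : Fintype N]
  [fintypeL : Fintype L]
  [fintypeQ : Fintype Q]
  [decEqN : DecidableEq N]
  T : ℕ
  startD : L → N
  startE : Q → N
  endE : Q → N
  α : Q → ℝ
  t : L → ℝ
  σ : L → ℝ
  E : N → Fin T → ℝ
  hα : ∀ q, 0 < α q ∧ α q ≤ 1
  ht : ∀ l, 0 < t l
  hσ : ∀ l, 0 < σ l
  hE : ∀ n i, 0 ≤ E n i

attribute [instance] NetT.fintypeN NetT.fintypeL NetT.fintypeQ NetT.decEqN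

/-- Feasibility of `(p, y)`: nonnegative energy transfers, link powers at least
`σ_l (e^{2 t_l} − 1)` in every slot, and the cumulative (energy-causality)
constraint at every node `n` and every slot `k`. -/
def NetT.Feasible (net : NetT) (p : net.L → Fin net.T → ℝ)
    (y : net.Q → Fin net.T → ℝ) : Prop :=
  (∀ q i, 0 ≤ y q i) ∧
  (∀ l i, net.σ l * (Real.exp (2 * net.t l) - 1) ≤ p l i) ∧
  (∀ (n : net.N) (k : Fin net.T),
    (∑ i ∈ Finset.Iic k,
      ((∑ l ∈ Finset.univ.filter (fun l => net.startD l = n), p l i) +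
        (∑ q ∈ Finset.univ.filter (fun q => net.startE q = n), y q i))) ≤
    ∑ i ∈ Finset.Iic k,
      (net.E n i + ∑ q ∈ Finset.univ.filter (fun q => net.endE q = n), net.α q * y q i))

/-- Strict feasibility: feasible with `p_{l,i} > σ_l (e^{2 t_l} − 1)` for all `l, i`. -/
def NetT.StrictFeasible (net : NetT) (p : net.L → Fin net.T → ℝ)
    (y : net.Q → Fin net.T → ℝ) : Prop :=
  net.Feasible p y ∧ ∀ l i, net.σ l * (Real.exp (2 * net.t l) - 1) < p l i

/-- The multi-slot network delay, `+∞` if some denominator is nonpositive. -/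
noncomputable def NetT.Delay (net : NetT) (p : net.L → Fin net.T → ℝ) : ℝ≥0∞ :=
  if ∀ l i, net.t l < (1 / 2) * Real.log (1 + p l i / net.σ l) then
    ENNReal.ofReal
      (∑ i, ∑ l, net.t l / ((1 / 2) * Real.log (1 + p l i / net.σ l) - net.t l))
  else ⊤

/-- A minimizer of the multi-slot network delay over feasible pairs. -/
def NetT.IsMinimizer (net : NetT) (p : net.L → Fin net.T → ℝ)
    (y : net.Q → Fin net.T → ℝ) : Prop :=
  net.Feasible p y ∧ ∀ p' y', net.Feasible p' y' → net.Delay p ≤ net.Delay p'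

/-- The marginal quantity
`g(p) = (t/(2σ)) · ((1/2)·ln(1 + p/σ) − t)^{−2} · (1 + p/σ)^{−1}`. -/
noncomputable def gMarg (t σ p : ℝ) : ℝ :=
  t / (2 * σ) / ((1 / 2) * Real.log (1 + p / σ) - t) ^ 2 / (1 + p / σ)

/-! At a minimizer every power lies strictly above its threshold `σ_l (e^{2 t_l} − 1)`, since
a strictly feasible pair has finite delay. Shifting power `ε` from link `m` to link `l` in
slot `i` leaves every node's outgoing power unchanged, so for small `|ε|` the shifted pair
is again feasible and its delay is at least the minimum. The delay therefore has a local
minimum at `ε = 0` along this direction, and its derivative there,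
`−g_l(p*_{l,i}) + g_m(p*_{m,i})`, vanishes. -/

open Filter Topology Finset

/-- The least power on which a link with noise `σ` carries flow `t` with finite delay. -/
noncomputable def minPower (t σ : ℝ) : ℝ := σ * (Real.exp (2 * t) - 1)

noncomputable def linkDelay (t σ p : ℝ) : ℝ := t / ((1 / 2) * Real.log (1 + p / σ) - t)

section LinkDelay

variable {t σ p : ℝ}

lemma exp_two_mul_lt_iff_minPower_lt (hσ : 0 < σ) :
    Real.exp (2 * t) < 1 + p / σ ↔ minPower t σ < p := by
  rw [minPower, ← lt_div_iff₀' hσ]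
  constructor <;> intro h <;> linarith

lemma lt_half_log_of_minPower_lt (hσ : 0 < σ) (h : minPower t σ < p) :
    t < (1 / 2) * Real.log (1 + p / σ) := by
  have hexp := (exp_two_mul_lt_iff_minPower_lt hσ).2 h
  have := (Real.lt_log_iff_exp_lt ((Real.exp_pos _).trans hexp)).2 hexp
  linarith

lemma minPower_lt_of_lt_half_log (hσ : 0 < σ) (hp : minPower t σ ≤ p)
    (h : t < (1 / 2) * Real.log (1 + p / σ)) : minPower t σ < p := by
  have hexp : Real.exp (2 * t) ≤ 1 + p / σ := by
    rw [minPower, ← le_div_iff₀' hσ] at hp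
    linarith
  refine (exp_two_mul_lt_iff_minPower_lt hσ).1 ((Real.lt_log_iff_exp_lt ?_).1 (by linarith))
  exact (Real.exp_pos _).trans_le hexp

lemma linkDelay_nonneg (ht : 0 ≤ t) (h : t < (1 / 2) * Real.log (1 + p / σ)) :
    0 ≤ linkDelay t σ p :=
  div_nonneg ht (by linarith)

lemma hasDerivAt_linkDelay (hσ : 0 < σ) (h : minPower t σ < p) :
    HasDerivAt (linkDelay t σ) (-gMarg t σ p) p := by
  have hX : 0 < 1 + p / σ := (Real.exp_pos _).trans ((exp_two_mul_lt_iff_minPower_lt hσ).2 h)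
  have hgap : (1 / 2) * Real.log (1 + p / σ) - t ≠ 0 := by
    linarith [lt_half_log_of_minPower_lt hσ h]
  have hX' : HasDerivAt (fun z => 1 + z / σ) (1 / σ) p := by
    simpa using ((hasDerivAt_id p).div_const σ).const_add 1
  have hden := ((hX'.log hX.ne').const_mul (1 / 2)).sub_const t
  refine ((hasDerivAt_const p t).div hden hgap).congr_deriv ?_
  rw [gMarg]
  set X := 1 + p / σ
  field_simp
  ring

end LinkDelay

section TransferDir

variable {L ι : Type*} [DecidableEq L] [DecidableEq ι]

def transferDir (l m : L) (i : ι) : L → ι → ℝ :=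
  Pi.single l (Pi.single i 1) - Pi.single m (Pi.single i 1)

lemma sum_transferDir_apply {l m : L} (i : ι) {s : Finset L} (h : l ∈ s ↔ m ∈ s) (j : ι) :
    ∑ l' ∈ s, transferDir l m i l' j = 0 := by
  simp [transferDir, Pi.single_apply, ite_apply, h]

lemma sum_sum_mul_transferDir [Fintype L] [Fintype ι] (c : L → ι → ℝ) (l m : L) (i : ι) :
    ∑ j, ∑ l', c l' j * transferDir l m i l' j = c l i - c m i := by
  simp [transferDir, Pi.single_apply, ite_apply, mul_sub, Finset.sum_sub_distrib]

end TransferDir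

namespace NetT

variable (net : NetT)

noncomputable def totalDelay (p : net.L → Fin net.T → ℝ) : ℝ :=
  ∑ i, ∑ l, linkDelay (net.t l) (net.σ l) (p l i)

def IsBalanced (d : net.L → Fin net.T → ℝ) : Prop :=
  ∀ n i, ∑ l ∈ univ.filter (fun l => net.startD l = n), d l i = 0

variable {net}

lemma isBalanced_transferDir [DecidableEq net.L] {l m : net.L} (h : net.startD l = net.startD m)
    (i : Fin net.T) : net.IsBalanced (transferDir l m i) :=
  fun n => sum_transferDir_apply i (by simp [h])

lemma delay_eq_ofReal_totalDelay {p : net.L → Fin net.T → ℝ}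
    (hp : ∀ l i, minPower (net.t l) (net.σ l) < p l i) :
    net.Delay p = ENNReal.ofReal (net.totalDelay p) := by
  rw [Delay, if_pos fun l i => lt_half_log_of_minPower_lt (net.hσ l) (hp l i)]
  rfl

lemma totalDelay_nonneg {p : net.L → Fin net.T → ℝ}
    (hp : ∀ l i, minPower (net.t l) (net.σ l) < p l i) : 0 ≤ net.totalDelay p :=
  sum_nonneg fun i _ => sum_nonneg fun l _ =>
    linkDelay_nonneg (net.ht l).le (lt_half_log_of_minPower_lt (net.hσ l) (hp l i))

lemma minPower_lt_of_delay_ne_top {p : net.L → Fin net.T → ℝ}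
    (hp : ∀ l i, minPower (net.t l) (net.σ l) ≤ p l i) (h : net.Delay p ≠ ⊤) :
    ∀ l i, minPower (net.t l) (net.σ l) < p l i := by
  by_contra hc
  refine h (if_neg fun hlog => hc fun l i => ?_)
  exact minPower_lt_of_lt_half_log (net.hσ l) (hp l i) (hlog l i)

lemma Feasible.add_smul {p : net.L → Fin net.T → ℝ} {y : net.Q → Fin net.T → ℝ}
    (h : net.Feasible p y) {d : net.L → Fin net.T → ℝ} (hd : net.IsBalanced d) {ε : ℝ}
    (hp : ∀ l i, minPower (net.t l) (net.σ l) ≤ (p + ε • d) l i) :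
    net.Feasible (p + ε • d) y := by
  refine ⟨h.1, hp, fun n k => ?_⟩
  simpa [Finset.sum_add_distrib, ← Finset.mul_sum, hd n] using h.2.2 n k

lemma eventually_minPower_lt_add_smul {p : net.L → Fin net.T → ℝ}
    (hp : ∀ l i, minPower (net.t l) (net.σ l) < p l i) (d : net.L → Fin net.T → ℝ) :
    ∀ᶠ ε in 𝓝 (0 : ℝ), ∀ l i, minPower (net.t l) (net.σ l) < (p + ε • d) l i := by
  refine eventually_all.2 fun l => eventually_all.2 fun i => ?_
  have hcont : Continuous fun ε : ℝ => p l i + ε * d l i := by fun_prop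
  exact (hcont.tendsto' 0 _ (by simp)).eventually (lt_mem_nhds (hp l i))

lemma hasDerivAt_totalDelay_add_smul {p : net.L → Fin net.T → ℝ}
    (hp : ∀ l i, minPower (net.t l) (net.σ l) < p l i) (d : net.L → Fin net.T → ℝ) :
    HasDerivAt (fun ε : ℝ => net.totalDelay (p + ε • d))
      (-∑ i, ∑ l, gMarg (net.t l) (net.σ l) (p l i) * d l i) 0 := by
  simp only [totalDelay, ← Finset.sum_neg_distrib, ← neg_mul]
  refine HasDerivAt.fun_sum fun i _ => HasDerivAt.fun_sum fun l _ => ?_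
  have hline : HasDerivAt (fun ε : ℝ => (p + ε • d) l i) (d l i) 0 := by
    simpa using ((hasDerivAt_id (0 : ℝ)).mul_const (d l i)).const_add (p l i)
  have hlink : HasDerivAt (linkDelay (net.t l) (net.σ l)) (-gMarg (net.t l) (net.σ l) (p l i))
      ((p + (0 : ℝ) • d) l i) := by
    simpa using hasDerivAt_linkDelay (net.hσ l) (hp l i)
  exact HasDerivAt.comp (h₂ := linkDelay (net.t l) (net.σ l)) 0 hlink hline

lemma IsMinimizer.minPower_lt (hsf : ∃ p y, net.StrictFeasible p y)
    {pstar : net.L → Fin net.T → ℝ} {ystar : net.Q → Fin net.T → ℝ}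
    (hmin : net.IsMinimizer pstar ystar) :
    ∀ l i, minPower (net.t l) (net.σ l) < pstar l i := by
  obtain ⟨p, y, hfeas, hstrict⟩ := hsf
  have hfinite : net.Delay p ≠ ⊤ := by
    rw [delay_eq_ofReal_totalDelay hstrict]
    exact ENNReal.ofReal_ne_top
  exact minPower_lt_of_delay_ne_top hmin.1.2.1 (ne_top_of_le_ne_top hfinite (hmin.2 p y hfeas))

lemma IsMinimizer.isLocalMin_totalDelay (hsf : ∃ p y, net.StrictFeasible p y)
    {pstar : net.L → Fin net.T → ℝ} {ystar : net.Q → Fin net.T → ℝ}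
    (hmin : net.IsMinimizer pstar ystar) {d : net.L → Fin net.T → ℝ} (hd : net.IsBalanced d) :
    IsLocalMin (fun ε : ℝ => net.totalDelay (pstar + ε • d)) 0 := by
  have hstar := hmin.minPower_lt hsf
  filter_upwards [eventually_minPower_lt_add_smul hstar d] with ε hε
  have hle := hmin.2 _ _ (hmin.1.add_smul hd fun l i => (hε l i).le)
  rw [delay_eq_ofReal_totalDelay hstar, delay_eq_ofReal_totalDelay hε,
    ENNReal.ofReal_le_ofReal_iff (totalDelay_nonneg hε)] at hle
  simpa using hle

end NetT

/-- If a strictly feasible pair exists, then at every minimizer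
`(p*, y*)` of the multi-slot network delay, for every node `n`, every slot `i`, and
any two data links `l, m` outgoing from `n`, `g_l(p*_{l,i}) = g_m(p*_{m,i})`. -/
theorem multislot_minimizer_equal_marginals (net : NetT)
    (hsf : ∃ p y, net.StrictFeasible p y)
    (pstar : net.L → Fin net.T → ℝ) (ystar : net.Q → Fin net.T → ℝ)
    (hmin : net.IsMinimizer pstar ystar) :
    ∀ (n : net.N) (i : Fin net.T) (l m : net.L),
      net.startD l = n → net.startD m = n →
      gMarg (net.t l) (net.σ l) (pstar l i) = gMarg (net.t m) (net.σ m) (pstar m i) := by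
  intro n i l m hl hm
  classical
  have hderiv := net.hasDerivAt_totalDelay_add_smul (hmin.minPower_lt hsf) (transferDir l m i)
  have hzero := (hmin.isLocalMin_totalDelay hsf
    (NetT.isBalanced_transferDir (hl.trans hm.symm) i)).hasDerivAt_eq_zero hderiv
  rw [sum_sum_mul_transferDir] at hzero
  linarith
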